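/- arXiv:1211.2455 — 4 statements merged into one kernel-verified Lean document; each statement's English description precedes it below -/
import Mathlib

section
/- Let q ≥ 2 and k ≥ 1 be integers, and let a be a real number with 1/2 < a < 1. Then the number of natural numbers n < q^k whose base-q digit sum satisfies s_q(n) ≥ a(q-1)k is at most q^k · exp(−(k/6)·((q−1)/(q+1))·(2a−1)²). -/
/-!
Chernoff's method: for `t ≥ 0`, the count is at most `e^{-t a (q-1) k}` times the exponential
moment `∑_{n < q^k} e^{t s_q(n)}`, which factors as `(∑_{d < q} e^{t d})^k` because the digits
of `n < q^k` range independently over `[0, q)`. Pairing `d` with `q - 1 - d` and using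
`cosh x ≤ e^{x²/2}` (Hoeffding's lemma) bounds one factor by `q e^{t(q-1)/2 + t²(q-1)²/8}`.
Optimising over `t` gives `q^k e^{-k(2a-1)²/2}`, which is stronger than the claimed bound.
-/

open Finset Real

theorem Finset.sum_range_mul_eq_sum_sum {M : Type*} [AddCommMonoid M] (f : ℕ → M) (q m : ℕ) :
    ∑ n ∈ range (q * m), f n = ∑ i ∈ range m, ∑ d ∈ range q, f (d + q * i) := by
  induction m with
  | zero => simp
  | succ m ih =>
    rw [Nat.mul_succ, sum_range_add, ih, sum_range_succ]
    exact congrArg _ (sum_congr rfl fun d _ => by rw [add_comm])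

theorem Nat.digits_sum_add_mul {q : ℕ} (hq : 1 < q) {d : ℕ} (hd : d < q) (m : ℕ) :
    (Nat.digits q (d + q * m)).sum = d + (Nat.digits q m).sum := by
  rcases Nat.eq_zero_or_pos d with rfl | hd0
  · rcases Nat.eq_zero_or_pos m with rfl | hm0
    · simp
    · rw [Nat.digits_add q hq 0 m hd (Or.inr hm0.ne'), List.sum_cons]
  · rw [Nat.digits_add q hq d m hd (Or.inl hd0.ne'), List.sum_cons]

theorem sum_range_pow_pow_digits_sum {R : Type*} [CommSemiring R] {q : ℕ} (hq : 1 < q) (x : R)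
    (k : ℕ) :
    ∑ n ∈ range (q ^ k), x ^ (Nat.digits q n).sum = (∑ d ∈ range q, x ^ d) ^ k := by
  induction k with
  | zero => simp
  | succ k ih =>
    calc ∑ n ∈ range (q ^ (k + 1)), x ^ (Nat.digits q n).sum
        = ∑ m ∈ range (q ^ k), ∑ d ∈ range q, x ^ (Nat.digits q m).sum * x ^ d := by
          rw [pow_succ', sum_range_mul_eq_sum_sum]
          refine sum_congr rfl fun m _ => sum_congr rfl fun d hd => ?_
          rw [Nat.digits_sum_add_mul hq (mem_range.mp hd), pow_add, mul_comm]
      _ = (∑ d ∈ range q, x ^ d) ^ (k + 1) := by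
          rw [← sum_mul_sum, ih, pow_succ]

theorem card_filter_le_mul_exp_le_sum_exp {ι : Type*} (s : Finset ι) (f : ι → ℝ) (c : ℝ)
    {t : ℝ} (ht : 0 ≤ t) :
    #(s.filter (c ≤ f ·)) * exp (t * c) ≤ ∑ i ∈ s, exp (t * f i) := by
  calc #(s.filter (c ≤ f ·)) * exp (t * c)
      ≤ ∑ i ∈ s.filter (c ≤ f ·), exp (t * f i) := by
        rw [← nsmul_eq_mul]
        refine card_nsmul_le_sum _ _ _ fun i hi => ?_
        exact exp_le_exp.mpr (mul_le_mul_of_nonneg_left (mem_filter.mp hi).2 ht)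
    _ ≤ ∑ i ∈ s, exp (t * f i) :=
        sum_le_sum_of_subset_of_nonneg (filter_subset _ _) fun _ _ _ => (exp_pos _).le

theorem exp_mul_add_exp_mul_sub_le {c x : ℝ} (hx₀ : 0 ≤ x) (hxc : x ≤ c) (t : ℝ) :
    exp (t * x) + exp (t * (c - x)) ≤ 2 * exp (t * c / 2 + (t * c) ^ 2 / 8) := by
  have h_cosh : exp (t * x) + exp (t * (c - x)) = 2 * exp (t * c / 2) * cosh (t * (x - c / 2)) :=
    calc exp (t * x) + exp (t * (c - x))
        = exp (t * c / 2 + t * (x - c / 2)) + exp (t * c / 2 + -(t * (x - c / 2))) := by ring_nf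
      _ = 2 * exp (t * c / 2) * cosh (t * (x - c / 2)) := by rw [exp_add, exp_add, cosh_eq]; ring
  have h_sq : (t * (x - c / 2)) ^ 2 / 2 ≤ (t * c) ^ 2 / 8 := by
    have : (x - c / 2) ^ 2 ≤ (c / 2) ^ 2 := by nlinarith
    nlinarith [mul_le_mul_of_nonneg_left this (sq_nonneg t)]
  calc exp (t * x) + exp (t * (c - x))
      ≤ 2 * exp (t * c / 2) * exp ((t * c) ^ 2 / 8) := by
        rw [h_cosh]
        gcongr
        exact (cosh_le_exp_half_sq _).trans (exp_le_exp.mpr h_sq)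
    _ = 2 * exp (t * c / 2 + (t * c) ^ 2 / 8) := by rw [exp_add, mul_assoc]

theorem sum_range_exp_mul_le (q : ℕ) (t : ℝ) :
    ∑ d ∈ range q, exp (t * d) ≤ q * exp (t * (q - 1) / 2 + (t * (q - 1)) ^ 2 / 8) := by
  have h_reflect : ∑ d ∈ range q, exp (t * d) = ∑ d ∈ range q, exp (t * ((q - 1 : ℝ) - d)) := by
    rw [← sum_range_reflect]
    refine sum_congr rfl fun d hd => ?_
    have hdq := mem_range.mp hd
    rw [Nat.cast_sub (by omega), Nat.cast_sub (by omega), Nat.cast_one]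
  have h_pair : 2 * ∑ d ∈ range q, exp (t * d)
      ≤ ∑ _d ∈ range q, 2 * exp (t * (q - 1) / 2 + (t * (q - 1)) ^ 2 / 8) := by
    rw [two_mul]
    nth_rw 2 [h_reflect]
    rw [← sum_add_distrib]
    refine sum_le_sum fun d hd => exp_mul_add_exp_mul_sub_le d.cast_nonneg ?_ t
    have : (d : ℝ) + 1 ≤ q := by exact_mod_cast mem_range.mp hd
    linarith
  rw [sum_const, card_range, nsmul_eq_mul] at h_pair
  linarith

theorem card_digits_sum_ge_le {q : ℕ} (hq : 1 < q) (k : ℕ) {a : ℝ} (ha : 1 / 2 ≤ a) :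
    (#((range (q ^ k)).filter fun n => a * (q - 1) * k ≤ ((Nat.digits q n).sum : ℝ)) : ℝ) ≤
      (q : ℝ) ^ k * exp (-k * (2 * a - 1) ^ 2 / 2) := by
  have hq₁ : (0 : ℝ) < q - 1 := sub_pos.mpr (by exact_mod_cast hq)
  -- the optimal tilt for the sub-Gaussian bound with variance proxy `(q - 1)² / 4`
  set t : ℝ := 2 * (2 * a - 1) / (q - 1) with ht
  have ht₀ : 0 ≤ t := div_nonneg (by linarith) hq₁.le
  have h_mgf : ∑ n ∈ range (q ^ k), exp (t * ((Nat.digits q n).sum : ℝ))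
      ≤ (q : ℝ) ^ k * exp (k * (t * (q - 1) / 2 + (t * (q - 1)) ^ 2 / 8)) :=
    calc ∑ n ∈ range (q ^ k), exp (t * ((Nat.digits q n).sum : ℝ))
        = (∑ d ∈ range q, exp (t * d)) ^ k := by
          simp_rw [mul_comm t, exp_nat_mul]
          exact sum_range_pow_pow_digits_sum hq _ k
      _ ≤ ((q : ℝ) * exp (t * (q - 1) / 2 + (t * (q - 1)) ^ 2 / 8)) ^ k := by
          gcongr
          exact sum_range_exp_mul_le q t
      _ = (q : ℝ) ^ k * exp (k * (t * (q - 1) / 2 + (t * (q - 1)) ^ 2 / 8)) := by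
          rw [mul_pow, ← exp_nat_mul]
  have h_chernoff := (card_filter_le_mul_exp_le_sum_exp _ _ (a * (q - 1) * k) ht₀).trans h_mgf
  rw [← le_div_iff₀ (exp_pos _), mul_div_assoc, ← exp_sub] at h_chernoff
  refine h_chernoff.trans_eq (congrArg (fun y => (q : ℝ) ^ k * exp y) ?_)
  rw [ht]
  field_simp
  ring

theorem chernoff_digit_sum_upper_general (q k : ℕ) (hq : 2 ≤ q) (a : ℝ)
    (ha₁ : 1 / 2 < a) :
    (((Finset.range (q ^ k)).filter fun n =>
        a * (q - 1) * k ≤ ((Nat.digits q n).sum : ℝ)).card : ℝ) ≤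
      (q : ℝ) ^ k * Real.exp (-(k / 6) * ((q - 1) / (q + 1)) * (2 * a - 1) ^ 2) := by
  have h_ratio : ((q : ℝ) - 1) / (q + 1) ≤ 3 := by
    rw [div_le_iff₀ (by positivity)]
    linarith
  refine (card_digits_sum_ge_le (by omega) k ha₁.le).trans ?_
  gcongr
  have : (0 : ℝ) ≤ k * (2 * a - 1) ^ 2 := by positivity
  nlinarith

/-- Chernoff bound for the upper tail of the base-`q` digit sum on `[0, q^k)`. -/
theorem chernoff_digit_sum_upper (q k : ℕ) (hq : 2 ≤ q) (hk : 1 ≤ k) (a : ℝ)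
    (ha₁ : 1 / 2 < a) (ha₂ : a < 1) :
    (((Finset.range (q ^ k)).filter fun n =>
        a * (q - 1) * k ≤ ((Nat.digits q n).sum : ℝ)).card : ℝ) ≤
      (q : ℝ) ^ k * Real.exp (-(k / 6) * ((q - 1) / (q + 1)) * (2 * a - 1) ^ 2) :=
  chernoff_digit_sum_upper_general q k hq a ha₁
end

section
/- Let q ≥ 2 and k ≥ 1 be integers, and let a be a real number with 0 < a < 1/2. Then the number of natural numbers n < q^k whose base-q digit sum satisfies s_q(n) ≤ a(q-1)k is at most q^k · exp(−(k/6)·((q−1)/(q+1))·(1−2a)²). -/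
open Finset

private lemma exp_neg_le_quad {x : ℝ} (hx : 0 ≤ x) :
    Real.exp (-x) ≤ 1 - x + x ^ 2 / 2 := by
  have h1 : 1 + x + x ^ 2 / 2 ≤ Real.exp x := Real.quadratic_le_exp_of_nonneg hx
  have hp : 0 < Real.exp x := Real.exp_pos x
  have he : Real.exp (-x) * Real.exp x = 1 := by
    rw [← Real.exp_add]; simp
  have hBnn : (0:ℝ) ≤ 1 - x + x ^ 2 / 2 := by nlinarith [sq_nonneg (x - 1)]
  have hB : 1 ≤ (1 - x + x ^ 2 / 2) * Real.exp x := by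
    nlinarith [mul_le_mul_of_nonneg_left h1 hBnn, sq_nonneg (x ^ 2)]
  nlinarith [he, hB, hp]

private lemma sum_range_cast (q : ℕ) :
    ∑ d ∈ Finset.range q, (d : ℝ) = q * (q - 1) / 2 := by
  induction q with
  | zero => simp
  | succ n ih => rw [Finset.sum_range_succ, ih]; push_cast; ring

private lemma sum_range_sq_cast (q : ℕ) :
    ∑ d ∈ Finset.range q, (d : ℝ) ^ 2 = q * (q - 1) * (2 * q - 1) / 6 := by
  induction q with
  | zero => simp
  | succ n ih => rw [Finset.sum_range_succ, ih]; push_cast; ring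

private lemma digitSum_add_mul (q : ℕ) (hq : 2 ≤ q) (d m : ℕ) (hd : d < q) :
    (Nat.digits q (d + q * m)).sum = d + (Nat.digits q m).sum := by
  rcases Nat.eq_zero_or_pos (d + q * m) with h | h
  · have hd0 : d = 0 := by omega
    have hm0 : m = 0 := by
      rcases Nat.mul_eq_zero.mp (by omega : q * m = 0) with h' | h'
      · omega
      · exact h'
    simp [hd0, hm0]
  · rw [Nat.digits_def' (by omega : 1 < q) h]
    simp [Nat.add_mul_mod_self_left, Nat.mod_eq_of_lt hd,
      Nat.add_mul_div_left _ _ (by omega : 0 < q), Nat.div_eq_of_lt hd]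

private lemma mgf_prod (q : ℕ) (hq : 2 ≤ q) (t : ℝ) :
    ∀ k : ℕ, ∑ n ∈ Finset.range (q ^ k), Real.exp (-t * ((Nat.digits q n).sum : ℝ))
      = (∑ d ∈ Finset.range q, Real.exp (-t * (d : ℝ))) ^ k := by
  intro k
  induction k with
  | zero => simp
  | succ k ih =>
    have hq0 : 0 < q := by omega
    rw [pow_succ, mul_comm (q ^ k) q]
    have hbij : ∑ n ∈ Finset.range (q * q ^ k),
          Real.exp (-t * ((Nat.digits q n).sum : ℝ))
        = ∑ p ∈ Finset.range q ×ˢ Finset.range (q ^ k),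
          Real.exp (-t * ((Nat.digits q (p.1 + q * p.2)).sum : ℝ)) := by
      apply Finset.sum_nbij' (fun n => (n % q, n / q)) (fun p => p.1 + q * p.2)
      · intro n hn
        simp only [Finset.mem_range, Finset.mem_product] at hn ⊢
        refine ⟨Nat.mod_lt _ hq0, (Nat.div_lt_iff_lt_mul hq0).mpr ?_⟩
        rwa [mul_comm] at hn
      · intro p hp
        simp only [Finset.mem_range, Finset.mem_product] at hp ⊢
        obtain ⟨h1, h2⟩ := hp
        have hmul : q * (p.2 + 1) ≤ q * q ^ k := Nat.mul_le_mul (le_refl q) h2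
        have hexp : q * (p.2 + 1) = q * p.2 + q := by ring
        omega
      · intro n _
        exact Nat.mod_add_div n q
      · intro p hp
        simp only [Finset.mem_range, Finset.mem_product] at hp
        have h1 : (p.1 + q * p.2) % q = p.1 := by
          rw [Nat.add_mul_mod_self_left, Nat.mod_eq_of_lt hp.1]
        have h2 : (p.1 + q * p.2) / q = p.2 := by
          rw [Nat.add_mul_div_left _ _ hq0, Nat.div_eq_of_lt hp.1]
          omega
        simp [Prod.ext_iff, h1, h2]
      · intro n _
        rw [Nat.mod_add_div n q]
    rw [hbij, Finset.sum_product]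
    have hsplit : ∀ p : ℕ × ℕ, p.1 < q →
        Real.exp (-t * ((Nat.digits q (p.1 + q * p.2)).sum : ℝ))
        = Real.exp (-t * (p.1 : ℝ)) * Real.exp (-t * ((Nat.digits q p.2).sum : ℝ)) := by
      intro p hp
      rw [digitSum_add_mul q hq p.1 p.2 hp, ← Real.exp_add]
      push_cast
      ring_nf
    calc ∑ d ∈ Finset.range q, ∑ m ∈ Finset.range (q ^ k),
            Real.exp (-t * ((Nat.digits q (d + q * m)).sum : ℝ))
        = ∑ d ∈ Finset.range q, ∑ m ∈ Finset.range (q ^ k),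
            Real.exp (-t * (d : ℝ)) * Real.exp (-t * ((Nat.digits q m).sum : ℝ)) := by
          apply Finset.sum_congr rfl
          intro d hd
          apply Finset.sum_congr rfl
          intro m _
          exact hsplit (d, m) (Finset.mem_range.mp hd)
      _ = (∑ d ∈ Finset.range q, Real.exp (-t * (d : ℝ)))
            * ∑ m ∈ Finset.range (q ^ k), Real.exp (-t * ((Nat.digits q m).sum : ℝ)) := by
          rw [← Finset.sum_mul_sum]
      _ = (∑ d ∈ Finset.range q, Real.exp (-t * (d : ℝ))) ^ (k + 1) := by
          rw [ih, pow_succ, mul_comm]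

/-- Chernoff bound for the lower tail of the base-`q` digit sum on `[0, q^k)`. -/
theorem chernoff_digit_sum_lower (q k : ℕ) (hq : 2 ≤ q) (hk : 1 ≤ k) (a : ℝ)
    (ha₁ : 0 < a) (ha₂ : a < 1 / 2) :
    (((Finset.range (q ^ k)).filter fun n =>
        ((Nat.digits q n).sum : ℝ) ≤ a * (q - 1) * k).card : ℝ) ≤
      (q : ℝ) ^ k * Real.exp (-(k / 6) * ((q - 1) / (q + 1)) * (1 - 2 * a) ^ 2) := by
  have hQ2 : (2:ℝ) ≤ (q:ℝ) := by exact_mod_cast hq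
  have hu : (0:ℝ) < 1 - 2 * a := by linarith
  have h2Q : (0:ℝ) < 2 * (q:ℝ) - 1 := by linarith
  have hQ1 : (0:ℝ) < (q:ℝ) + 1 := by linarith
  set t : ℝ := 3 * (1 - 2 * a) / (2 * (q:ℝ) - 1) with htdef
  have htpos : 0 < t := by rw [htdef]; positivity
  set M : ℝ := a * ((q:ℝ) - 1) * k with hMdef
  set S : ℝ := ∑ d ∈ Finset.range q, Real.exp (-t * (d : ℝ)) with hSdef
  -- Step A: Chernoff/Markov
  have stepA : (((Finset.range (q ^ k)).filter fun n =>
      ((Nat.digits q n).sum : ℝ) ≤ a * ((q:ℝ) - 1) * k).card : ℝ)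
      ≤ Real.exp (t * M) * ∑ n ∈ Finset.range (q ^ k),
          Real.exp (-t * ((Nat.digits q n).sum : ℝ)) := by
    rw [Finset.mul_sum]
    calc (((Finset.range (q ^ k)).filter fun n =>
          ((Nat.digits q n).sum : ℝ) ≤ a * ((q:ℝ) - 1) * k).card : ℝ)
        = ∑ n ∈ (Finset.range (q ^ k)).filter fun n =>
            ((Nat.digits q n).sum : ℝ) ≤ a * ((q:ℝ) - 1) * k, (1:ℝ) := by simp
      _ ≤ ∑ n ∈ (Finset.range (q ^ k)).filter fun n =>
            ((Nat.digits q n).sum : ℝ) ≤ a * ((q:ℝ) - 1) * k,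
            Real.exp (t * M) * Real.exp (-t * ((Nat.digits q n).sum : ℝ)) := by
          apply Finset.sum_le_sum
          intro n hn
          have hs : ((Nat.digits q n).sum : ℝ) ≤ a * ((q:ℝ) - 1) * k :=
            (Finset.mem_filter.mp hn).2
          rw [← Real.exp_add]
          apply Real.one_le_exp
          have h' : t * ((Nat.digits q n).sum : ℝ) ≤ t * M := by
            apply mul_le_mul_of_nonneg_left _ htpos.le
            rw [hMdef]; exact hs
          linarith
      _ ≤ ∑ n ∈ Finset.range (q ^ k),
            Real.exp (t * M) * Real.exp (-t * ((Nat.digits q n).sum : ℝ)) := by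
          apply Finset.sum_le_sum_of_subset_of_nonneg (Finset.filter_subset _ _)
          intro n _ _
          positivity
  -- Step B: MGF bound
  set x : ℝ := -t * ((q:ℝ) - 1) / 2 + t ^ 2 * ((q:ℝ) - 1) * (2 * (q:ℝ) - 1) / 12
    with hxdef
  have hSnn : 0 ≤ S := by
    rw [hSdef]; apply Finset.sum_nonneg; intro d _; positivity
  have stepB : S ≤ (q:ℝ) * Real.exp x := by
    have hterm : ∀ d ∈ Finset.range q,
        Real.exp (-t * (d : ℝ)) ≤ 1 - t * d + t ^ 2 / 2 * (d:ℝ) ^ 2 := by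
      intro d _
      have hnn : (0:ℝ) ≤ t * d := by positivity
      have h := exp_neg_le_quad hnn
      calc Real.exp (-t * (d:ℝ)) = Real.exp (-(t * d)) := by ring_nf
        _ ≤ 1 - t * d + (t * d) ^ 2 / 2 := h
        _ = 1 - t * d + t ^ 2 / 2 * (d:ℝ) ^ 2 := by ring
    have h1 : S ≤ (q:ℝ) * (1 + x) := by
      calc S ≤ ∑ d ∈ Finset.range q, (1 - t * d + t ^ 2 / 2 * (d:ℝ) ^ 2) :=
            Finset.sum_le_sum hterm
        _ = (q:ℝ) - t * (∑ d ∈ Finset.range q, (d:ℝ))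
              + t ^ 2 / 2 * ∑ d ∈ Finset.range q, (d:ℝ) ^ 2 := by
            rw [Finset.sum_add_distrib, Finset.sum_sub_distrib, ← Finset.mul_sum,
              ← Finset.mul_sum]
            simp
        _ = (q:ℝ) * (1 + x) := by
            rw [sum_range_cast, sum_range_sq_cast, hxdef]
            ring
    have h2 : 1 + x ≤ Real.exp x := by
      have := Real.add_one_le_exp x; linarith
    calc S ≤ (q:ℝ) * (1 + x) := h1
      _ ≤ (q:ℝ) * Real.exp x := by nlinarith
  -- the key scalar inequality
  have key : t * (a * ((q:ℝ) - 1)) + x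
      ≤ -(1 / 6) * (((q:ℝ) - 1) / ((q:ℝ) + 1)) * (1 - 2 * a) ^ 2 := by
    have hL : t * (a * ((q:ℝ) - 1)) + x
        = -(3 * (1 - 2 * a) ^ 2 * ((q:ℝ) - 1)) / (4 * (2 * (q:ℝ) - 1)) := by
      rw [hxdef, htdef]
      field_simp
      ring
    have hR : -(1 / 6) * (((q:ℝ) - 1) / ((q:ℝ) + 1)) * (1 - 2 * a) ^ 2
        = -((1 - 2 * a) ^ 2 * ((q:ℝ) - 1)) / (6 * ((q:ℝ) + 1)) := by
      field_simp
    rw [hL, hR, div_le_div_iff₀ (by positivity) (by positivity)]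
    have hQm1 : (0:ℝ) ≤ (q:ℝ) - 1 := by linarith
    nlinarith [mul_nonneg (mul_nonneg (sq_nonneg (1 - 2 * a)) hQm1)
      (by linarith : (0:ℝ) ≤ 10 * (q:ℝ) + 22)]
  -- assemble
  have hkpos : (0:ℝ) < (k:ℝ) := by
    have : 0 < k := by omega
    exact_mod_cast this
  calc (((Finset.range (q ^ k)).filter fun n =>
        ((Nat.digits q n).sum : ℝ) ≤ a * ((q:ℝ) - 1) * k).card : ℝ)
      ≤ Real.exp (t * M) * ∑ n ∈ Finset.range (q ^ k),
          Real.exp (-t * ((Nat.digits q n).sum : ℝ)) := stepA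
    _ = Real.exp (t * M) * S ^ k := by rw [mgf_prod q hq t k, hSdef]
    _ ≤ Real.exp (t * M) * ((q:ℝ) * Real.exp x) ^ k := by
        apply mul_le_mul_of_nonneg_left _ (Real.exp_pos _).le
        exact pow_le_pow_left₀ hSnn stepB k
    _ = (q:ℝ) ^ k * Real.exp (t * M + k * x) := by
        rw [mul_pow, ← Real.exp_nat_mul, Real.exp_add]
        ring
    _ ≤ (q:ℝ) ^ k * Real.exp (-((k:ℝ) / 6) * (((q:ℝ) - 1) / ((q:ℝ) + 1)) * (1 - 2 * a) ^ 2) := by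
        apply mul_le_mul_of_nonneg_left _ (by positivity)
        apply Real.exp_le_exp.mpr
        have hEq : t * M + (k:ℝ) * x = (k:ℝ) * (t * (a * ((q:ℝ) - 1)) + x) := by
          rw [hMdef]; ring
        rw [hEq]
        calc (k:ℝ) * (t * (a * ((q:ℝ) - 1)) + x)
            ≤ (k:ℝ) * (-(1 / 6) * (((q:ℝ) - 1) / ((q:ℝ) + 1)) * (1 - 2 * a) ^ 2) :=
              mul_le_mul_of_nonneg_left key hkpos.le
          _ = -((k:ℝ) / 6) * (((q:ℝ) - 1) / ((q:ℝ) + 1)) * (1 - 2 * a) ^ 2 := by ring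
end

section
/- Let q ≥ 2 be an integer and let t be a nonzero real number. Then (1/q) · sinh(t·q/(q−1)) / sinh(t/(q−1)) ≤ exp( ((q+1)/(6(q−1))) · t² ). -/
/-!
With `s = t / (q - 1)` the ratio is `sinh (q s) / (q sinh s)`, which is even in `s`, so it
suffices to show `sinh (Q s) ≤ Q sinh s · exp (c s²)` for `s ≥ 0`, where `Q ^ 2 = 6c + 1`.
Both sides are power series in `s` with nonnegative coefficients. Expanding
`Q ^ (2m) = (6c + 1) ^ m` binomially, the coefficients of `s ^ (2m+1)` compare term by term through
`6 ^ k · m! / (m - k)! ≤ (2m+1)! / (2(m-k)+1)!`, a product of the factor-wise bounds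
`6j ≤ 2j (2j + 1)`.
-/

open Real Finset Nat

theorem six_pow_mul_factorial_mul_le (k l : ℕ) :
    6 ^ k * (k + l)! * (2 * l + 1)! ≤ (2 * (k + l) + 1)! * l ! := by
  induction k with
  | zero => simp [mul_comm]
  | succ k ih =>
    rw [show k + 1 + l = (k + l) + 1 by omega,
      show 2 * (k + l + 1) + 1 = 2 * (k + l) + 1 + 1 + 1 by omega,
      factorial_succ, factorial_succ (2 * (k + l) + 1 + 1), factorial_succ (2 * (k + l) + 1)]
    calc 6 ^ (k + 1) * ((k + l + 1) * (k + l)!) * (2 * l + 1)!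
        = 6 * (k + l + 1) * (6 ^ k * (k + l)! * (2 * l + 1)!) := by ring
      _ ≤ (2 * (k + l) + 1 + 1 + 1) * (2 * (k + l) + 1 + 1) * ((2 * (k + l) + 1)! * l !) :=
        Nat.mul_le_mul (by nlinarith) ih
      _ = _ := by ring

theorem six_pow_mul_choose_mul_factorial_le (k l : ℕ) :
    6 ^ k * (k + l).choose k * k ! * (2 * l + 1)! ≤ (2 * (k + l) + 1)! := by
  have hfac := choose_mul_factorial_mul_factorial (le_add_right k l)
  rw [Nat.add_sub_cancel_left] at hfac
  refine Nat.le_of_mul_le_mul_right ?_ (factorial_pos l)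
  calc _ = 6 ^ k * ((k + l).choose k * k ! * l !) * (2 * l + 1)! := by ring
    _ = 6 ^ k * (k + l)! * (2 * l + 1)! := by rw [hfac]
    _ ≤ _ := six_pow_mul_factorial_mul_le k l

theorem six_mul_add_one_pow_div_factorial_le {c : ℝ} (hc : 0 ≤ c) (m : ℕ) :
    (6 * c + 1) ^ m / (2 * m + 1)! ≤
      ∑ kl ∈ antidiagonal m, c ^ kl.1 / (kl.1 ! * (2 * kl.2 + 1)!) := by
  rw [(Commute.all _ _).add_pow', sum_div]
  refine sum_le_sum fun ⟨k, l⟩ hkl => ?_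
  obtain rfl : k + l = m := by simpa using hkl
  have key : ((6 ^ k * (k + l).choose k * k ! * (2 * l + 1)! : ℕ) : ℝ) ≤
      (2 * (k + l) + 1)! := by
    exact_mod_cast six_pow_mul_choose_mul_factorial_le k l
  rw [nsmul_eq_mul, one_pow, mul_one, mul_pow, div_le_div_iff₀ (by positivity) (by positivity)]
  calc _ = c ^ k * ((6 ^ k * (k + l).choose k * k ! * (2 * l + 1)! : ℕ) : ℝ) := by
        push_cast; ring
    _ ≤ _ := by gcongr

theorem hasSum_sum_antidiagonal_mul_of_nonneg {f g : ℕ → ℝ} {a b : ℝ} (hf : HasSum f a)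
    (hg : HasSum g b) (hf₀ : 0 ≤ f) (hg₀ : 0 ≤ g) :
    HasSum (fun n ↦ ∑ kl ∈ antidiagonal n, f kl.1 * g kl.2) (a * b) := by
  have hfg := hf.summable.mul_of_nonneg hg.summable hf₀ hg₀
  rw [← hf.tsum_eq, ← hg.tsum_eq,
    hf.summable.tsum_mul_tsum_eq_tsum_sum_antidiagonal hg.summable hfg]
  exact (summable_sum_mul_antidiagonal_of_summable_mul hfg).hasSum

theorem sinh_mul_le_mul_exp_mul_sinh {Q s : ℝ} (hQ : 1 ≤ Q) (hs : 0 ≤ s) :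
    sinh (Q * s) ≤ Q * (exp ((Q ^ 2 - 1) / 6 * s ^ 2) * sinh s) := by
  set c := (Q ^ 2 - 1) / 6
  have hc : 0 ≤ c := by simp only [c]; nlinarith
  have hprod := hasSum_sum_antidiagonal_mul_of_nonneg
    (exp_eq_exp_ℝ ▸ NormedSpace.expSeries_div_hasSum_exp (c * s ^ 2)) (hasSum_sinh s)
    (fun k ↦ by positivity) (fun l ↦ by positivity)
  refine hasSum_le (fun m ↦ ?_) (hasSum_sinh (Q * s)) (hprod.mul_left Q)
  have hterm : ∀ kl ∈ antidiagonal m,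
      (c * s ^ 2) ^ kl.1 / kl.1 ! * (s ^ (2 * kl.2 + 1) / (2 * kl.2 + 1)!) =
        s ^ (2 * m + 1) * (c ^ kl.1 / (kl.1 ! * (2 * kl.2 + 1)!)) := by
    rintro ⟨k, l⟩ hkl
    obtain rfl : k + l = m := by simpa using hkl
    rw [mul_pow, ← pow_mul]
    ring
  have hQ2 : Q ^ 2 = 6 * c + 1 := by simp only [c]; ring
  calc (Q * s) ^ (2 * m + 1) / (2 * m + 1)!
      = Q * (s ^ (2 * m + 1) * ((6 * c + 1) ^ m / (2 * m + 1)!)) := by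
        rw [← hQ2]; ring
    _ ≤ _ := by
      rw [sum_congr rfl hterm, ← mul_sum]
      gcongr
      exact six_mul_add_one_pow_div_factorial_le hc m

theorem sinh_mul_div_mul_sinh_le_exp {Q : ℝ} (hQ : 1 ≤ Q) (s : ℝ) :
    sinh (Q * s) / (Q * sinh s) ≤ exp ((Q ^ 2 - 1) / 6 * s ^ 2) := by
  wlog hs : 0 ≤ s generalizing s
  · simpa [mul_neg, neg_div_neg_eq] using this (-s) (by linarith)
  refine div_le_of_le_mul₀ (mul_nonneg (by linarith) (sinh_nonneg_iff.mpr hs)) (exp_pos _).le ?_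
  exact (sinh_mul_le_mul_exp_mul_sinh hQ hs).trans_eq (by ring)

theorem mgf_digit_sum_le_general (q : ℕ) (hq : 2 ≤ q) (t : ℝ) :
    1 / (q : ℝ) * Real.sinh (t * q / (q - 1)) / Real.sinh (t / (q - 1)) ≤
      Real.exp ((q + 1) / (6 * (q - 1)) * t ^ 2) := by
  have hq' : (2 : ℝ) ≤ q := by exact_mod_cast hq
  have hq1 : (q : ℝ) - 1 ≠ 0 := by linarith
  have harg : t * q / (q - 1) = q * (t / (q - 1)) := by ring
  have hexp : (q + 1) / (6 * (q - 1)) * t ^ 2 = ((q : ℝ) ^ 2 - 1) / 6 * (t / (q - 1)) ^ 2 := by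
    field_simp
    ring
  rw [harg, hexp, one_div_mul_eq_div, div_div]
  exact sinh_mul_div_mul_sinh_le_exp (by linarith) _

/-- Sub-Gaussian bound for the moment generating function of the normalized
digit variable: `(1/q) sinh(tq/(q-1)) / sinh(t/(q-1)) ≤ exp((q+1)/(6(q-1)) t²)`. -/
theorem mgf_digit_sum_le (q : ℕ) (hq : 2 ≤ q) (t : ℝ) (ht : t ≠ 0) :
    1 / (q : ℝ) * Real.sinh (t * q / (q - 1)) / Real.sinh (t / (q - 1)) ≤
      Real.exp ((q + 1) / (6 * (q - 1)) * t ^ 2) :=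
  mgf_digit_sum_le_general q hq t
end

section
/- Let q ≥ 2 be an integer and let k, l be natural numbers with l ≤ k. Then for every natural number m with m < q^l, the base-q digit sum satisfies s_q(q^k − q^l + m) = (q−1)(k−l) + s_q(m). -/
/-! Writing `d = k - l`, we have `q^k - q^l + m = m + q^l (q^d - 1)` with `m < q^l`, so the base-`q`
expansion is that of `m`, padded with zeros to length `l`, followed by that of `q^d - 1`,
which consists of `d` digits `q - 1`. -/

namespace Nat

theorem digits_pow_sub_one {b : ℕ} (hb : 1 < b) (d : ℕ) :
    digits b (b ^ d - 1) = List.replicate d (b - 1) := by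
  induction d with
  | zero => simp
  | succ d ih =>
    have hsplit : b ^ (d + 1) - 1 = (b - 1) + b * (b ^ d - 1) := by
      have : 1 ≤ b ^ d := one_le_pow d b (by omega)
      rw [Nat.mul_sub_one, pow_succ']
      have : b ≤ b * b ^ d := Nat.le_mul_of_pos_right b this
      omega
    rw [hsplit, digits_add b hb _ _ (by omega) (.inl (by omega)), ih, List.replicate_succ]

theorem digits_sum_add_base_pow_mul {b l m : ℕ} (hb : 1 < b) (hm : m < b ^ l) (n : ℕ) :
    (digits b (m + b ^ l * n)).sum = (digits b m).sum + (digits b n).sum := by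
  rcases n.eq_zero_or_pos with rfl | hn
  · simp
  have hconcat := digits_append_zeroes_append_digits (k := l - (digits b m).length) (n := m) hb hn
  rw [Nat.add_sub_cancel' ((digits_length_le_iff hb m).2 hm)] at hconcat
  simp [← hconcat]

theorem pow_sub_pow_eq_pow_mul_pow_sub_one {b : ℕ} (hb : 0 < b) (k l : ℕ) :
    b ^ k - b ^ l = b ^ l * (b ^ (k - l) - 1) := by
  rcases le_total l k with h | h
  · rw [Nat.mul_sub_one, ← pow_add, Nat.add_sub_cancel' h]
  · -- for `k ≤ l` both sides are `0` by truncated subtraction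
    simp [Nat.sub_eq_zero_of_le h, Nat.pow_le_pow_right hb h]

end Nat

theorem digit_sum_top_interval_general (q : ℕ) (hq : 2 ≤ q) (k l : ℕ)
    (m : ℕ) (hm : m < q ^ l) :
    (Nat.digits q (q ^ k - q ^ l + m)).sum = (q - 1) * (k - l) + (Nat.digits q m).sum := by
  rw [Nat.pow_sub_pow_eq_pow_mul_pow_sub_one (by omega), add_comm,
    Nat.digits_sum_add_base_pow_mul hq hm, Nat.digits_pow_sub_one hq, List.sum_replicate,
    smul_eq_mul, add_comm, mul_comm]

/-- The digit sum of a number in the interval `[q^k - q^l, q^k - 1]`: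
the top `k - l` digits are all `q - 1`. -/
theorem digit_sum_top_interval (q : ℕ) (hq : 2 ≤ q) (k l : ℕ) (hlk : l ≤ k)
    (m : ℕ) (hm : m < q ^ l) :
    (Nat.digits q (q ^ k - q ^ l + m)).sum = (q - 1) * (k - l) + (Nat.digits q m).sum :=
  digit_sum_top_interval_general q hq k l m hm
end
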